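/- arXiv:math/0210096 — 5 statements merged into one kernel-verified Lean document; each statement's English description precedes it below -/
import Mathlib

section
/- Let k be a commutative ring, A a Z-graded k-algebra, d ≥ 1 an integer, f₁,…,fₙ ∈ A homogeneous elements of degree d, and let h : k[T₁,…,Tₙ] → A be the k-algebra morphism sending each Tᵢ to fᵢ. Let I = (f₁,…,fₙ) ⊆ A. Then the kernel of the composite k-algebra morphism k[T₁,…,Tₙ] → A → A/H⁰_I(A) equals the ideal of inertia forms TF_{(T₁,…,Tₙ)}(ker h) of ker h with respect to the ideal (T₁,…,Tₙ) of k[T₁,…,Tₙ]. -/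
/-!
For any ring map `h : R → S` and ideal `J ⊆ R`, the power `(J S)ᴺ` is generated by `h(Jᴺ)` and
the annihilator of `h a` is an ideal, so `(J S)ᴺ · h a = 0` exactly when `Jᴺ · a ⊆ ker h`.
Taking `J = (T₁,…,Tₙ)`, whose image generates `I`, gives the theorem.
-/

/-- The ideal of inertia forms (Trägheitsformen) of `I` with respect to `J`:
`TF_J(I) = ⋃ₙ (I :_R Jⁿ) = {a ∈ R | ∃ N, J^N · a ⊆ I}`. -/
noncomputable def inertiaForms {R : Type*} [CommRing R] (J I : Ideal R) : Ideal R :=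
  ⨆ n : ℕ, I.colon ((J ^ n : Ideal R) : Set R)

section

variable {R S F : Type*} [CommRing R] [CommRing S] [FunLike F R S] [RingHomClass F R S]

lemma mem_inertiaForms {J I : Ideal R} {a : R} :
    a ∈ inertiaForms J I ↔ ∃ N : ℕ, a ∈ I.colon ((J ^ N : Ideal R) : Set R) :=
  Submodule.mem_iSup_of_directed _ <| Monotone.directed_le fun _ _ hmn =>
    Submodule.colon_mono le_rfl (Ideal.pow_le_pow_right hmn)

lemma Ideal.comap_bot_colon_map (h : F) (K : Ideal R) :
    ((⊥ : Ideal S).colon (K.map h : Set S)).comap h = (RingHom.ker h).colon (K : Set R) := by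
  ext a
  simp only [Ideal.mem_comap, Submodule.mem_colon, SetLike.mem_coe, smul_eq_mul, RingHom.mem_ker,
    map_mul]
  refine ⟨fun H x hx => H _ (Ideal.mem_map_of_mem h hx), fun H y hy => ?_⟩
  have hK : K.map h ≤ (⊥ : Ideal S).colon {h a} :=
    Ideal.map_le_iff_le_comap.2 fun x hx => by simpa [mul_comm] using H x hx
  simpa [mul_comm] using hK hy

theorem comap_inertiaForms_map_bot (h : F) (J : Ideal R) :
    (inertiaForms (J.map h) ⊥).comap h = inertiaForms J (RingHom.ker h) := by
  ext a
  rw [Ideal.mem_comap, mem_inertiaForms, mem_inertiaForms]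
  simp only [← Ideal.map_pow, ← Ideal.mem_comap, Ideal.comap_bot_colon_map]

end

theorem statement0_general {k A : Type*} [CommRing k] [CommRing A] [Algebra k A]
    (n : ℕ) (f : Fin n → A)
    (I : Ideal A) (hI : I = Ideal.span (Set.range f)) :
    RingHom.ker ((Ideal.Quotient.mkₐ k (inertiaForms I ⊥)).comp
        (MvPolynomial.aeval f : MvPolynomial (Fin n) k →ₐ[k] A))
      = inertiaForms
          (Ideal.span (Set.range (MvPolynomial.X : Fin n → MvPolynomial (Fin n) k)))
          (RingHom.ker (MvPolynomial.aeval f : MvPolynomial (Fin n) k →ₐ[k] A)) := by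
  have hJI : (Ideal.span (Set.range (MvPolynomial.X : Fin n → MvPolynomial (Fin n) k))).map
      (MvPolynomial.aeval f : MvPolynomial (Fin n) k →ₐ[k] A) = I := by
    rw [Ideal.map_span, ← Set.range_comp, hI]
    simp [Function.comp_def]
  rw [← comap_inertiaForms_map_bot, hJI]
  ext p
  simp only [RingHom.mem_ker, Ideal.mem_comap, AlgHom.coe_comp, Function.comp_apply,
    Ideal.Quotient.mkₐ_eq_mk, Ideal.Quotient.eq_zero_iff_mem]

/-- for `h : k[T₁,…,Tₙ] → A`, `Tᵢ ↦ fᵢ` with the `fᵢ` homogeneous of degree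
`d ≥ 1` in a `ℤ`-graded `k`-algebra `A` and `I = (f₁,…,fₙ)`, the kernel of the composite
`k[T₁,…,Tₙ] → A → A/H⁰_I(A)` equals `TF_{(T₁,…,Tₙ)}(ker h)`.  Note that
`H⁰_I(A) = {a | ∃ N, Iᴺ·a = 0} = inertiaForms I ⊥`. -/
theorem statement0 {k A : Type*} [CommRing k] [CommRing A] [Algebra k A]
    (𝒜 : ℤ → Submodule k A) [GradedAlgebra 𝒜]
    (n : ℕ) (d : ℤ) (hd : 1 ≤ d) (f : Fin n → A) (hf : ∀ i, f i ∈ 𝒜 d)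
    (I : Ideal A) (hI : I = Ideal.span (Set.range f)) :
    RingHom.ker ((Ideal.Quotient.mkₐ k (inertiaForms I ⊥)).comp
        (MvPolynomial.aeval f : MvPolynomial (Fin n) k →ₐ[k] A))
      = inertiaForms
          (Ideal.span (Set.range (MvPolynomial.X : Fin n → MvPolynomial (Fin n) k)))
          (RingHom.ker (MvPolynomial.aeval f : MvPolynomial (Fin n) k →ₐ[k] A)) :=
  statement0_general n f I hI
end

section
/- Let k be a commutative ring, A a Z-graded k-algebra, f₁,…,fₙ ∈ A homogeneous of degree d ≥ 1, and let β : A[T₁,…,Tₙ] → A[Z,Z⁻¹] be the A-algebra morphism to the Laurent polynomial ring sending each Tᵢ to fᵢ·Z⁻¹. Then ker(β) = TF_{(Z)}((f₁−T₁Z, …, fₙ−TₙZ)) ∩ A[T₁,…,Tₙ], where the inertia forms are computed in the polynomial ring A[T₁,…,Tₙ,Z] with respect to the ideal (Z). -/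
/-- The `A`-algebra morphism `β : A[T₁,…,Tₙ] → A[Z,Z⁻¹]`, `Tᵢ ↦ fᵢ·Z⁻¹` (its image is the
Rees algebra of the ideal `(f₁,…,fₙ)`). -/
noncomputable def reesBeta {A : Type*} [CommRing A] {n : ℕ} (f : Fin n → A) :
    MvPolynomial (Fin n) A →ₐ[A] LaurentPolynomial A :=
  MvPolynomial.aeval fun i => LaurentPolynomial.C (f i) * LaurentPolynomial.T (-1)

/-- The ideal `(f₁ - T₁Z, …, fₙ - TₙZ)` of `A[T₁,…,Tₙ][Z]`. -/
noncomputable def fTZIdeal {A : Type*} [CommRing A] {n : ℕ} (f : Fin n → A) :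
    Ideal (Polynomial (MvPolynomial (Fin n) A)) :=
  Ideal.span (Set.range fun i =>
    Polynomial.C (MvPolynomial.C (f i)) - Polynomial.C (MvPolynomial.X i) * Polynomial.X)

/-
The evaluation `B : A[T₁,…,Tₙ][Z] → A[Z,Z⁻¹]`, `Tᵢ ↦ fᵢZ⁻¹`, `Z ↦ Z`, restricts to `β` on
`A[T₁,…,Tₙ]` and kills `I = (fᵢ - TᵢZ)`. Since `Z` is a unit in `A[Z,Z⁻¹]`, every inertia form
lies in `ker B`. Conversely, modulo `I` the relation `Z·Tᵢ ≡ fᵢ` shows that every `P` satisfies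
`Zᵐ·P ≡ q(Z)` for some `m` and some `q ∈ A[Z]`; if `B P = 0` then `q` maps to `0` in `A[Z,Z⁻¹]`,
so `q = 0` and `Zᵐ·P ∈ I`. Hence `ker B = TF_{(Z)}(I)`, and intersecting with `A[T₁,…,Tₙ]`
gives `ker β`.
-/

open Polynomial

theorem mem_inertiaForms_span_singleton_iff {R : Type*} [CommRing R] {x a : R} {I : Ideal R} :
    a ∈ inertiaForms (Ideal.span {x}) I ↔ ∃ m : ℕ, a * x ^ m ∈ I := by
  have hdir : Directed (· ≤ ·) fun m : ℕ => I.colon ((Ideal.span {x} ^ m : Ideal R) : Set R) :=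
    Monotone.directed_le fun m m' hm =>
      Submodule.colon_mono le_rfl (SetLike.coe_subset_coe.mpr (Ideal.pow_le_pow_right hm))
  rw [inertiaForms, Submodule.mem_iSup_of_directed _ hdir]
  simp only [Ideal.span_singleton_pow, Ideal.mem_colon_span_singleton]

namespace Subsemiring

variable {R : Type*} [CommSemiring R]

def powSaturation (T : Subsemiring R) {z : R} (hz : z ∈ T) : Subsemiring R where
  carrier := {y | ∃ m : ℕ, z ^ m * y ∈ T}
  mul_mem' := by
    rintro a b ⟨m₁, h₁⟩ ⟨m₂, h₂⟩
    refine ⟨m₁ + m₂, ?_⟩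
    convert T.mul_mem h₁ h₂ using 1
    ring
  one_mem' := ⟨0, by simp [T.one_mem]⟩
  add_mem' := by
    rintro a b ⟨m₁, h₁⟩ ⟨m₂, h₂⟩
    refine ⟨m₁ + m₂, ?_⟩
    convert T.add_mem (T.mul_mem (T.pow_mem hz m₂) h₁) (T.mul_mem (T.pow_mem hz m₁) h₂) using 1
    ring
  zero_mem' := ⟨0, by simp [T.zero_mem]⟩

theorem mem_powSaturation {T : Subsemiring R} {z : R} (hz : z ∈ T) {y : R} :
    y ∈ T.powSaturation hz ↔ ∃ m : ℕ, z ^ m * y ∈ T :=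
  Iff.rfl

end Subsemiring

theorem Polynomial.mem_of_C_C_mem_of_C_X_mem_of_X_mem {σ R : Type*} [CommSemiring R]
    (S : Subsemiring (MvPolynomial σ R)[X]) (hC : ∀ a, C (MvPolynomial.C a) ∈ S)
    (hT : ∀ i, C (MvPolynomial.X i) ∈ S) (hZ : X ∈ S) (P : (MvPolynomial σ R)[X]) : P ∈ S := by
  have hC' : ∀ p, C p ∈ S := fun p => by
    induction p using MvPolynomial.induction_on with
    | C a => exact hC a
    | add p q hp hq => rw [C_add]; exact S.add_mem hp hq
    | mul_X p i hp => rw [C_mul]; exact S.mul_mem hp (hT i)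
  induction P using Polynomial.induction_on with
  | C p => exact hC' p
  | add P Q hP hQ => exact S.add_mem hP hQ
  | monomial k p h => rw [pow_succ, ← mul_assoc]; exact S.mul_mem h hZ

section Rees

variable {A : Type*} [CommRing A] {n : ℕ}

noncomputable def reesEval (f : Fin n → A) :
    (MvPolynomial (Fin n) A)[X] →+* LaurentPolynomial A :=
  eval₂RingHom (reesBeta f).toRingHom (LaurentPolynomial.T 1)

theorem reesEval_comp_C (f : Fin n → A) : (reesEval f).comp C = (reesBeta f).toRingHom := by
  ext <;> simp [reesEval]

theorem reesEval_X (f : Fin n → A) : reesEval f X = LaurentPolynomial.T 1 := by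
  simp [reesEval]

theorem reesEval_comp_mapRingHom_C (f : Fin n → A) :
    (reesEval f).comp (mapRingHom MvPolynomial.C) = Polynomial.toLaurent := by
  refine Polynomial.ringHom_ext (fun a => ?_) ?_ <;>
    simp [reesEval, reesBeta, LaurentPolynomial.algebraMap_apply]

theorem fTZIdeal_le_ker_reesEval (f : Fin n → A) : fTZIdeal f ≤ RingHom.ker (reesEval f) := by
  rw [fTZIdeal, Ideal.span_le]
  rintro _ ⟨i, rfl⟩
  rw [SetLike.mem_coe, RingHom.mem_ker, map_sub, map_mul, ← RingHom.comp_apply,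
    ← RingHom.comp_apply (reesEval f), reesEval_comp_C, reesEval_X]
  simp only [reesBeta, AlgHom.toRingHom_eq_coe, RingHom.coe_coe, MvPolynomial.aeval_C,
    MvPolynomial.aeval_X]
  rw [mul_assoc, ← LaurentPolynomial.T_add, neg_add_cancel, LaurentPolynomial.T_zero, mul_one,
    LaurentPolynomial.algebraMap_apply, Algebra.algebraMap_self, RingHom.id_apply, sub_self]

theorem exists_X_pow_mul_sub_map_C_mem (f : Fin n → A) (P : (MvPolynomial (Fin n) A)[X]) :
    ∃ (m : ℕ) (q : A[X]), X ^ m * P - q.map MvPolynomial.C ∈ fTZIdeal f := by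
  let π := Ideal.Quotient.mk (fTZIdeal f)
  let S : Subsemiring ((MvPolynomial (Fin n) A)[X] ⧸ fTZIdeal f) :=
    (π.comp (mapRingHom MvPolynomial.C)).rangeS
  have hZ : π X ∈ S := ⟨X, by simp [π]⟩
  let T := Subsemiring.powSaturation (R := (MvPolynomial (Fin n) A)[X] ⧸ fTZIdeal f) S hZ
  have hP : P ∈ T.comap π := by
    refine Polynomial.mem_of_C_C_mem_of_C_X_mem_of_X_mem (T.comap π)
      (fun a => ⟨0, C a, by simp [π]⟩) (fun i => ⟨1, C (f i), ?_⟩) ⟨0, X, by simp [π]⟩ P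
    have hrel : π (C (MvPolynomial.C (f i))) = π (C (MvPolynomial.X i) * X) :=
      Ideal.Quotient.eq.mpr (Ideal.subset_span ⟨i, rfl⟩)
    rw [RingHom.comp_apply, coe_mapRingHom, Polynomial.map_C, pow_one, ← map_mul, mul_comm]
    exact hrel
  obtain ⟨m, q, hq⟩ := hP
  refine ⟨m, q, Ideal.Quotient.eq.mp ?_⟩
  rw [map_mul, map_pow]
  exact hq.symm

theorem ker_reesEval (f : Fin n → A) :
    RingHom.ker (reesEval f) = inertiaForms (Ideal.span {X}) (fTZIdeal f) := by
  ext P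
  rw [mem_inertiaForms_span_singleton_iff, RingHom.mem_ker]
  constructor
  · intro hP
    obtain ⟨m, q, hq⟩ := exists_X_pow_mul_sub_map_C_mem f P
    have hq_ker := fTZIdeal_le_ker_reesEval f hq
    rw [RingHom.mem_ker, map_sub, map_mul, hP, mul_zero, zero_sub, neg_eq_zero] at hq_ker
    have hq0 : q = 0 := Polynomial.toLaurent_injective <| by
      rw [← reesEval_comp_mapRingHom_C f, RingHom.comp_apply, coe_mapRingHom, hq_ker, map_zero]
    refine ⟨m, ?_⟩
    simpa [hq0, mul_comm] using hq
  · rintro ⟨m, hm⟩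
    have h0 : reesEval f P * LaurentPolynomial.T 1 ^ m = 0 := by
      simpa [reesEval_X] using fTZIdeal_le_ker_reesEval f hm
    exact (((LaurentPolynomial.isUnit_T 1).pow m).mul_left_eq_zero).mp h0

end Rees

theorem statement2_general {A : Type*} [CommRing A]
    (n : ℕ) (f : Fin n → A) :
    RingHom.ker (reesBeta f)
      = Ideal.comap
          (Polynomial.C : MvPolynomial (Fin n) A →+* Polynomial (MvPolynomial (Fin n) A))
          (inertiaForms (Ideal.span {Polynomial.X}) (fTZIdeal f)) := by
  rw [← ker_reesEval, RingHom.comap_ker, reesEval_comp_C]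
  rfl

/-- `ker β = TF_{(Z)}((f₁-T₁Z,…,fₙ-TₙZ)) ∩ A[T₁,…,Tₙ]`, the intersection with
`A[T₁,…,Tₙ]` being the preimage under the inclusion `A[T] ⊆ A[T][Z]`. -/
theorem statement2 {k A : Type*} [CommRing k] [CommRing A] [Algebra k A]
    (𝒜 : ℤ → Submodule k A) [GradedAlgebra 𝒜]
    (n : ℕ) (d : ℤ) (hd : 1 ≤ d) (f : Fin n → A) (hf : ∀ i, f i ∈ 𝒜 d) :
    RingHom.ker (reesBeta f)
      = Ideal.comap
          (Polynomial.C : MvPolynomial (Fin n) A →+* Polynomial (MvPolynomial (Fin n) A))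
          (inertiaForms (Ideal.span {Polynomial.X}) (fTZIdeal f)) :=
  statement2_general n f
end

section
/- Let k be a commutative ring, A a Z-graded k-algebra such that the structure map k → A₀ is injective (k ⊆ A₀), f₁,…,fₙ ∈ A homogeneous of degree d ≥ 1, h : k[T₁,…,Tₙ] → A the k-algebra morphism sending Tᵢ to fᵢ, and β : A[T₁,…,Tₙ] → A[Z,Z⁻¹] the A-algebra morphism sending Tᵢ to fᵢ·Z⁻¹. Then ker(h) = ker(β) ∩ k[T₁,…,Tₙ] = TF_{(Z)}((f₁−T₁Z,…,fₙ−TₙZ)) ∩ k[T₁,…,Tₙ], the inertia forms being computed in A[T₁,…,Tₙ,Z] with respect to the ideal (Z). -/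
/-!
If `h p = 0`, then every homogeneous component `pₑ` of `p` also satisfies `h pₑ = 0`: the `fᵢ`
share the degree `d ≠ 0`, so `h pₑ` lies in degree `e • d` and the grading separates them. Modulo
`(fᵢ - TᵢZ)`, multiplying a form of degree `e` by `Z ^ e` turns every `Tᵢ` into `fᵢ`, hence
`Z ^ deg p * p ≡ ∑ₑ Z ^ (deg p - e) * h pₑ = 0` and `p` is an inertia form. Conversely, the map
`A[T][Z] → A[Z,Z⁻¹]` extending `β` by `Z ↦ Z` kills `(fᵢ - TᵢZ)`, so `Z ^ N * p ∈ (fᵢ - TᵢZ)`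
forces `β p = 0`, `Z` being a unit; evaluating `β p` at `Z = 1` gives back `h p`.
-/

open MvPolynomial

namespace MvPolynomial

theorem IsHomogeneous.eval₂_const_mul {R S σ : Type*} [CommSemiring R] [CommSemiring S]
    {q : MvPolynomial σ R} {e : ℕ} (hq : q.IsHomogeneous e) (g : R →+* S) (t : S) (x : σ → S) :
    MvPolynomial.eval₂ g (fun i => t * x i) q = t ^ e * MvPolynomial.eval₂ g x q := by
  rw [eval₂_eq, eval₂_eq, Finset.mul_sum]
  refine Finset.sum_congr rfl fun m hm => ?_
  simp_rw [mul_pow, Finset.prod_mul_distrib, Finset.prod_pow_eq_pow_sum,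
    ← hq.degree_eq_sum_deg_support hm]
  ring

theorem IsHomogeneous.pow_mul_eq_of_mul_X_eq {R S σ : Type*} [CommSemiring R]
    [CommSemiring S] {q : MvPolynomial σ R} {e : ℕ} (hq : q.IsHomogeneous e)
    (π : MvPolynomial σ R →+* S) (z : S) (x : σ → R) (hz : ∀ i, z * π (X i) = π (C (x i))) :
    z ^ e * π q = π (C (eval x q)) :=
  calc z ^ e * π q = z ^ e * MvPolynomial.eval₂ (π.comp C) (π ∘ X) q := by
        rw [← eval₂_comp_left, eval₂_eta]
    _ = MvPolynomial.eval₂ (π.comp C) (fun i => π (C (x i))) q := by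
        simp_rw [← hq.eval₂_const_mul _ z _, Function.comp_apply, hz]
    _ = π (C (eval x q)) := (eval₂_comp_left (π.comp C) (RingHom.id R) x q).symm

section Graded

variable {ι σ k A : Type*} [DecidableEq ι] [AddCommMonoid ι] [CommRing k] [CommRing A]
  [Algebra k A] (𝒜 : ι → Submodule k A) [GradedAlgebra 𝒜] {d : ι} {x : σ → A}

theorem IsHomogeneous.aeval_mem_graded (hx : ∀ i, x i ∈ 𝒜 d) {q : MvPolynomial σ k} {e : ℕ}
    (hq : q.IsHomogeneous e) : MvPolynomial.aeval x q ∈ 𝒜 (e • d) := by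
  rw [aeval_def, eval₂_eq]
  refine Submodule.sum_mem _ fun m hm => ?_
  have hdeg : 0 + ∑ i ∈ m.support, m i • d = e • d := by
    rw [zero_add, ← Finset.sum_smul, ← hq.degree_eq_sum_deg_support hm]
  exact hdeg ▸ SetLike.mul_mem_graded (SetLike.algebraMap_mem_graded 𝒜 (coeff m q))
    (SetLike.prod_pow_mem_graded 𝒜 _ _ _ fun i _ => hx i)

theorem aeval_homogeneousComponent_eq_zero (hsmul : Function.Injective (· • d : ℕ → ι))
    (hx : ∀ i, x i ∈ 𝒜 d) {p : MvPolynomial σ k} (hp : aeval x p = 0) (e : ℕ) :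
    aeval x (homogeneousComponent e p) = 0 := by
  rcases lt_or_ge p.totalDegree e with he | he
  · rw [homogeneousComponent_eq_zero _ _ he, map_zero]
  have hindep : iSupIndep fun e : ℕ => 𝒜 (e • d) :=
    (DirectSum.Decomposition.isInternal 𝒜).submodule_iSupIndep.comp hsmul
  refine (iSupIndep_iff_finsetSum_eq_zero_imp_eq_zero _).mp hindep
    (Finset.range (p.totalDegree + 1)) (fun e => aeval x (homogeneousComponent e p))
    (fun e _ => (homogeneousComponent_isHomogeneous e p).aeval_mem_graded 𝒜 hx) ?_ e
    (Finset.mem_range_succ_iff.mpr he)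
  rw [← map_sum, sum_homogeneousComponent, hp]

end Graded

end MvPolynomial

theorem mem_inertiaForms_span_singleton {R : Type*} [CommRing R] {I : Ideal R} {x a : R} :
    a ∈ inertiaForms (Ideal.span {x}) I ↔ ∃ N : ℕ, x ^ N * a ∈ I := by
  have hmono : Monotone fun N : ℕ => I.colon ((Ideal.span {x} ^ N : Ideal R) : Set R) :=
    fun _ _ hNM => Submodule.colon_mono le_rfl (Ideal.pow_le_pow_right hNM)
  rw [inertiaForms, Submodule.mem_iSup_of_directed _ hmono.directed_le]
  simp only [Ideal.span_singleton_pow, Ideal.mem_colon_span_singleton, mul_comm]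

section Rees

variable {A : Type*} [CommRing A] {n : ℕ} (f : Fin n → A)

theorem map_X_pow_totalDegree_mul_C_map_eq_zero {k S : Type*} [CommRing k] [Algebra k A]
    [CommRing S] (ψ : Polynomial (MvPolynomial (Fin n) A) →+* S)
    (hψ : ∀ i, ψ Polynomial.X * ψ (Polynomial.C (X i)) = ψ (Polynomial.C (C (f i))))
    {p : MvPolynomial (Fin n) k} (hp : ∀ e, aeval f (homogeneousComponent e p) = 0) :
    ψ (Polynomial.X ^ p.totalDegree * Polynomial.C (map (algebraMap k A) p)) = 0 := by
  have hsum : map (algebraMap k A) p = ∑ e ∈ Finset.range (p.totalDegree + 1),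
      map (algebraMap k A) (homogeneousComponent e p) := by
    rw [← map_sum, sum_homogeneousComponent]
  rw [hsum, map_sum, Finset.mul_sum, map_sum]
  refine Finset.sum_eq_zero fun e he => ?_
  have hcomp := ((homogeneousComponent_isHomogeneous e p).map (algebraMap k A))
    |>.pow_mul_eq_of_mul_X_eq (ψ.comp Polynomial.C) (ψ Polynomial.X) f hψ
  rw [← Nat.sub_add_cancel (Finset.mem_range_succ_iff.mp he), pow_add, mul_assoc, map_mul,
    map_mul, map_pow, map_pow, ← RingHom.comp_apply ψ Polynomial.C, hcomp, eval_map,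
    ← aeval_def, hp, map_zero, map_zero, mul_zero]

theorem X_pow_totalDegree_mul_C_map_mem_fTZIdeal {k : Type*} [CommRing k] [Algebra k A]
    {p : MvPolynomial (Fin n) k} (hp : ∀ e, aeval f (homogeneousComponent e p) = 0) :
    Polynomial.X ^ p.totalDegree * Polynomial.C (map (algebraMap k A) p) ∈ fTZIdeal f := by
  have hgen (i : Fin n) : Ideal.Quotient.mk (fTZIdeal f) Polynomial.X *
      Ideal.Quotient.mk (fTZIdeal f) (Polynomial.C (X i)) =
      Ideal.Quotient.mk (fTZIdeal f) (Polynomial.C (C (f i))) := by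
    rw [← map_mul, mul_comm]
    exact (Ideal.Quotient.eq.mpr (Ideal.subset_span ⟨i, rfl⟩ : _ ∈ fTZIdeal f)).symm
  have h := map_X_pow_totalDegree_mul_C_map_eq_zero (S := _ ⧸ fTZIdeal f) f
    (Ideal.Quotient.mk (fTZIdeal f)) hgen hp
  exact Ideal.Quotient.eq_zero_iff_mem.mp h

theorem reesBeta_eq_zero_of_X_pow_mul_C_mem {q : MvPolynomial (Fin n) A} {N : ℕ}
    (h : Polynomial.X ^ N * Polynomial.C q ∈ fTZIdeal f) : reesBeta f q = 0 := by
  let φ := Polynomial.eval₂RingHom (reesBeta f).toRingHom (LaurentPolynomial.T 1)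
  have hker : fTZIdeal f ≤ RingHom.ker φ := by
    rw [fTZIdeal, Ideal.span_le]
    rintro _ ⟨i, rfl⟩
    simp only [SetLike.mem_coe, RingHom.mem_ker, map_sub, map_mul, φ,
      Polynomial.coe_eval₂RingHom, Polynomial.eval₂_C, Polynomial.eval₂_X,
      AlgHom.toRingHom_eq_coe, RingHom.coe_coe, reesBeta, aeval_C, aeval_X]
    rw [mul_assoc, ← LaurentPolynomial.T_add, neg_add_cancel, LaurentPolynomial.T_zero, mul_one]
    exact sub_self _
  have hφ : LaurentPolynomial.T N * reesBeta f q = 0 := by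
    simpa [φ, LaurentPolynomial.T_pow] using hker h
  exact (LaurentPolynomial.isUnit_T _).mul_right_eq_zero.mp hφ

theorem eval₂_one_reesBeta (q : MvPolynomial (Fin n) A) :
    LaurentPolynomial.eval₂ (RingHom.id A) 1 (reesBeta f q) = aeval f q := by
  rw [reesBeta, aeval_def, aeval_def, eval₂_comp_left]
  congr
  · ext a; exact LaurentPolynomial.eval₂_C _ _ _
  · ext i; simp

end Rees

theorem statement5_general {k A : Type*} [CommRing k] [CommRing A] [Algebra k A]
    (𝒜 : ℤ → Submodule k A) [GradedAlgebra 𝒜]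
    (n : ℕ) (d : ℤ) (hd : 1 ≤ d) (f : Fin n → A) (hf : ∀ i, f i ∈ 𝒜 d) :
    RingHom.ker (MvPolynomial.aeval f : MvPolynomial (Fin n) k →ₐ[k] A)
      = Ideal.comap (MvPolynomial.map (algebraMap k A)) (RingHom.ker (reesBeta f)) ∧
    RingHom.ker (MvPolynomial.aeval f : MvPolynomial (Fin n) k →ₐ[k] A)
      = Ideal.comap
          ((Polynomial.C : MvPolynomial (Fin n) A →+* Polynomial (MvPolynomial (Fin n) A)).comp
            (MvPolynomial.map (algebraMap k A)))
          (inertiaForms (Ideal.span {Polynomial.X}) (fTZIdeal f)) := by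
  have hsmul : Function.Injective (· • d : ℕ → ℤ) := fun a b hab =>
    Nat.cast_injective (mul_right_cancel₀ (by omega : d ≠ 0) (by simpa using hab))
  have ker_le_inertia (p : MvPolynomial (Fin n) k) (hp : aeval f p = 0) :
      Polynomial.C (map (algebraMap k A) p) ∈
        inertiaForms (Ideal.span {Polynomial.X}) (fTZIdeal f) :=
    mem_inertiaForms_span_singleton.mpr ⟨_, X_pow_totalDegree_mul_C_map_mem_fTZIdeal f
      (aeval_homogeneousComponent_eq_zero 𝒜 hsmul hf hp)⟩
  have inertia_le_reesBeta (q : MvPolynomial (Fin n) A)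
      (hq : Polynomial.C q ∈ inertiaForms (Ideal.span {Polynomial.X}) (fTZIdeal f)) :
      reesBeta f q = 0 :=
    have ⟨_, hN⟩ := mem_inertiaForms_span_singleton.mp hq
    reesBeta_eq_zero_of_X_pow_mul_C_mem f hN
  have reesBeta_le_ker (p : MvPolynomial (Fin n) k)
      (hp : reesBeta f (map (algebraMap k A) p) = 0) : aeval f p = 0 := by
    rw [← aeval_map_algebraMap A, ← eval₂_one_reesBeta, hp, map_zero]
  constructor <;> ext p <;> simp only [RingHom.mem_ker, Ideal.mem_comap, RingHom.comp_apply]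
  · exact ⟨fun hp => inertia_le_reesBeta _ (ker_le_inertia p hp), reesBeta_le_ker p⟩
  · exact ⟨ker_le_inertia p, fun hp => reesBeta_le_ker p (inertia_le_reesBeta _ hp)⟩

/-- if `k ⊆ A₀` then
`ker h = ker β ∩ k[T₁,…,Tₙ] = TF_{(Z)}((f₁-T₁Z,…,fₙ-TₙZ)) ∩ k[T₁,…,Tₙ]`, the intersections
with `k[T₁,…,Tₙ]` being preimages under the canonical inclusions. -/
theorem statement5 {k A : Type*} [CommRing k] [CommRing A] [Algebra k A]
    (𝒜 : ℤ → Submodule k A) [GradedAlgebra 𝒜]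
    (hinj : Function.Injective (algebraMap k A))
    (n : ℕ) (d : ℤ) (hd : 1 ≤ d) (f : Fin n → A) (hf : ∀ i, f i ∈ 𝒜 d) :
    RingHom.ker (MvPolynomial.aeval f : MvPolynomial (Fin n) k →ₐ[k] A)
      = Ideal.comap (MvPolynomial.map (algebraMap k A)) (RingHom.ker (reesBeta f)) ∧
    RingHom.ker (MvPolynomial.aeval f : MvPolynomial (Fin n) k →ₐ[k] A)
      = Ideal.comap
          ((Polynomial.C : MvPolynomial (Fin n) A →+* Polynomial (MvPolynomial (Fin n) A)).comp
            (MvPolynomial.map (algebraMap k A)))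
          (inertiaForms (Ideal.span {Polynomial.X}) (fTZIdeal f)) :=
  statement5_general 𝒜 n d hd f hf
end

section
/- Let k be a commutative ring, A a Z-graded k-algebra, f₁,…,fₙ ∈ A homogeneous of degree d ≥ 1, and β : A[T₁,…,Tₙ] → A[Z,Z⁻¹] the A-algebra morphism sending Tᵢ to fᵢ·Z⁻¹. If J is an ideal of A such that H⁰_J(A) = 0, then ker(β) = TF_{J·A[T₁,…,Tₙ]}(ker(β)), i.e. the ideal ker(β) of A[T₁,…,Tₙ] equals its own ideal of inertia forms with respect to the extension of J to A[T₁,…,Tₙ]. -/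
open AddMonoidAlgebra

section InertiaForms

variable {R : Type*} [CommRing R]

theorem mem_inertiaForms_iff {J I : Ideal R} {x : R} :
    x ∈ inertiaForms J I ↔ ∃ m : ℕ, ∀ y ∈ J ^ m, x * y ∈ I := by
  have hmono : Monotone fun m : ℕ => I.colon ((J ^ m : Ideal R) : Set R) :=
    fun _ _ hab => Submodule.colon_mono le_rfl (Ideal.pow_le_pow_right hab)
  simp only [inertiaForms, Submodule.mem_iSup_of_directed _ hmono.directed_le,
    Submodule.mem_colon, SetLike.mem_coe, smul_eq_mul]

theorem le_inertiaForms (J I : Ideal R) : I ≤ inertiaForms J I :=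
  fun _ hx => mem_inertiaForms_iff.2 ⟨0, fun y _ => I.mul_mem_right y hx⟩

theorem inertiaForms_ker_eq_ker {S : Type*} [CommRing S] (g : R →+* S) (J : Ideal R)
    (h : inertiaForms (J.map g) ⊥ = ⊥) : inertiaForms J (RingHom.ker g) = RingHom.ker g := by
  refine le_antisymm (fun x hx => ?_) (le_inertiaForms J _)
  obtain ⟨m, hm⟩ := mem_inertiaForms_iff.1 hx
  have hkill : (J ^ m).map g ≤ (⊥ : Ideal S).colon {g x} :=
    Ideal.map_le_iff_le_comap.2 fun y hy => by
      simpa [Submodule.mem_colon_singleton, ← map_mul, mul_comm] using hm y hy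
  have hgx : g x ∈ inertiaForms (J.map g) ⊥ := mem_inertiaForms_iff.2 ⟨m, fun q hq => by
    rw [← Ideal.map_pow] at hq
    simpa [Submodule.mem_colon_singleton, mul_comm] using hkill hq⟩
  simpa [h] using hgx

theorem AlgHom.inertiaForms_ker_eq_ker {A B C : Type*} [CommRing A] [CommRing B] [CommRing C]
    [Algebra A B] [Algebra A C] (φ : B →ₐ[A] C) (J : Ideal A)
    (h : inertiaForms (J.map (algebraMap A C)) ⊥ = ⊥) :
    inertiaForms (J.map (algebraMap A B)) (RingHom.ker φ) = RingHom.ker φ := by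
  refine _root_.inertiaForms_ker_eq_ker (φ : B →+* C) _ ?_
  rwa [Ideal.map_map, φ.comp_algebraMap]

end InertiaForms

theorem AddMonoidAlgebra.inertiaForms_map_algebraMap_bot_eq_bot {A M : Type*} [CommRing A]
    [AddCommMonoid M] {J : Ideal A} (hJ : inertiaForms J ⊥ = ⊥) :
    inertiaForms (J.map (algebraMap A A[M])) ⊥ = ⊥ := by
  refine eq_bot_iff.2 fun p hp => ?_
  obtain ⟨m, hm⟩ := mem_inertiaForms_iff.1 hp
  have hcoeff (z : M) : p.coeff z ∈ inertiaForms J ⊥ := mem_inertiaForms_iff.2 ⟨m, fun y hy => by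
    have hy' : algebraMap A A[M] y ∈ (J.map (algebraMap A A[M])) ^ m := by
      rw [← Ideal.map_pow]
      exact Ideal.mem_map_of_mem _ hy
    have hyp : y • p = 0 := by
      simpa [Algebra.smul_def, mul_comm] using hm _ hy'
    simpa [mul_comm] using congrArg (fun q : A[M] => q.coeff z) hyp⟩
  ext z
  simpa [hJ] using hcoeff z

theorem statement6_general {A : Type*} [CommRing A]
    (n : ℕ) (f : Fin n → A)
    (J : Ideal A) (hJ : inertiaForms J (⊥ : Ideal A) = ⊥) :
    RingHom.ker (reesBeta f)
      = inertiaForms (Ideal.map (MvPolynomial.C : A →+* MvPolynomial (Fin n) A) J)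
          (RingHom.ker (reesBeta f)) := by
  rw [← MvPolynomial.algebraMap_eq, (reesBeta f).inertiaForms_ker_eq_ker J
    (AddMonoidAlgebra.inertiaForms_map_algebraMap_bot_eq_bot hJ)]

/-- if `J` is an ideal of `A` with `H⁰_J(A) = 0` (i.e. `A` has no `J`-torsion,
encoded as `inertiaForms J ⊥ = ⊥`), then `ker β = TF_{J·A[T₁,…,Tₙ]}(ker β)`. -/
theorem statement6 {k A : Type*} [CommRing k] [CommRing A] [Algebra k A]
    (𝒜 : ℤ → Submodule k A) [GradedAlgebra 𝒜]
    (n : ℕ) (d : ℤ) (hd : 1 ≤ d) (f : Fin n → A) (hf : ∀ i, f i ∈ 𝒜 d)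
    (J : Ideal A) (hJ : inertiaForms J (⊥ : Ideal A) = ⊥) :
    RingHom.ker (reesBeta f)
      = inertiaForms (Ideal.map (MvPolynomial.C : A →+* MvPolynomial (Fin n) A) J)
          (RingHom.ker (reesBeta f)) :=
  statement6_general n f J hJ
end

section
/- Let k be a field, n ≥ 3, A = k[X₁,…,X_{n−1}] with each Xᵢ of degree 1, m = (X₁,…,X_{n−1}), and let f₁,…,fₙ ∈ A be homogeneous of the same degree d ≥ 1, I = (f₁,…,fₙ). Let h : k[T₁,…,Tₙ] → A be the k-algebra morphism sending Tᵢ to fᵢ, and let α : A[T₁,…,Tₙ] → Sym_A(I) be the canonical surjection with α(Tᵢ) = fᵢ; grade Sym_A(I) = A[T]/ker(α) by the grading of A (deg Xᵢ = 1, deg Tᵢ = 0), with graded pieces Sym_A(I)_ν. Assume that I is of linear type outside V(m) and that η is an integer such that H⁰_m(Sym_A(I))_ν = 0 for all ν ≥ η. Then for all ν ≥ η, the annihilator ann_{k[T₁,…,Tₙ]}(Sym_A(I)_ν) of the k[T₁,…,Tₙ]-module Sym_A(I)_ν equals ker(h). -/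
/-- The kernel of the canonical surjection `α : A[T₁,…,Tₙ] → Sym_A(I)`, `Tᵢ ↦ fᵢ`, for
`I = (f₁,…,fₙ)`:  `ker α = { Σᵢ Tᵢgᵢ : gᵢ ∈ A[T], Σᵢ fᵢgᵢ = 0 }`, so that
`Sym_A(I) = A[T₁,…,Tₙ]/ker α`. -/
noncomputable def symKernel {A : Type*} [CommRing A] {n : ℕ} (f : Fin n → A) :
    Ideal (MvPolynomial (Fin n) A) :=
  Ideal.span {P | ∃ g : Fin n → MvPolynomial (Fin n) A,
    (∑ i, MvPolynomial.C (f i) * g i) = 0 ∧ P = ∑ i, MvPolynomial.X i * g i}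

/-!
If `P` kills `Sym(I)_ν`, then `P · X₁^ν ∈ ker α ⊆ ker(Tᵢ ↦ fᵢ)`, so `P(f) · X₁^ν = 0` in the
domain `A` and `P(f) = 0`.

Conversely, as the `fᵢ` share a positive degree, `P(f) = 0` forces `Pₑ(f) = 0` for every
homogeneous component `Pₑ` of `P`, so `P(f₁Z⁻¹, …, fₙZ⁻¹) = Σₑ Pₑ(f) Z⁻ᵉ = 0` and `P·F` lies in
the kernel of the Rees map. Linear type outside `V(m)` makes `ker(Rees)/ker α` supported on
`V(m)`, hence killed by a power of the finitely generated ideal `m`; the vanishing of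
`H⁰_m(Sym(I))_ν` then puts `P·F` in `ker α`.
-/

open MvPolynomial

theorem MvPolynomial.IsHomogeneous.aeval_mul_const {R S σ : Type*} [CommSemiring R]
    [CommSemiring S] [Algebra R S] {Q : MvPolynomial σ R} {e : ℕ} (hQ : Q.IsHomogeneous e)
    (x : σ → S) (r : S) :
    MvPolynomial.aeval (fun i => x i * r) Q = MvPolynomial.aeval x Q * r ^ e := by
  conv_lhs => rw [Q.as_sum]
  conv_rhs => rw [Q.as_sum]
  simp only [map_sum, Finset.sum_mul, aeval_monomial]
  refine Finset.sum_congr rfl fun s hs => ?_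
  rw [hQ.degree_eq_sum_deg_support hs, ← Finset.prod_pow_eq_pow_sum]
  simp only [Finsupp.prod, mul_pow, Finset.prod_mul_distrib, mul_assoc]

theorem MvPolynomial.homogeneousComponent_mul_aeval_of_isHomogeneous {R σ τ : Type*}
    [CommSemiring R] {d : ℕ} (hd : 0 < d) {f : τ → MvPolynomial σ R}
    (hf : ∀ i, (f i).IsHomogeneous d) (P : MvPolynomial τ R) (e : ℕ) :
    homogeneousComponent (d * e) (aeval f P) = aeval f (homogeneousComponent e P) := by
  conv_lhs => rw [← sum_homogeneousComponent P]
  have hcomp : ∀ e' ∈ Finset.range (P.totalDegree + 1),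
      homogeneousComponent (d * e) (aeval f (homogeneousComponent e' P))
        = if e = e' then aeval f (homogeneousComponent e' P) else 0 := by
    intro e' _
    rw [homogeneousComponent_of_mem ((mem_homogeneousSubmodule _ _).mpr
      ((homogeneousComponent_isHomogeneous e' P).aeval f hf))]
    simp only [Nat.mul_left_cancel_iff hd]
  rw [map_sum, map_sum, Finset.sum_congr rfl hcomp, Finset.sum_ite_eq]
  split_ifs with he
  · rfl
  · rw [homogeneousComponent_eq_zero _ _ (by simpa using he), map_zero]

theorem MvPolynomial.isHomogeneous_coeff_map_mul {R σ τ : Type*} [CommSemiring R]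
    (P : MvPolynomial τ R) {F : MvPolynomial τ (MvPolynomial σ R)} {ν : ℕ}
    (hF : ∀ e, (F.coeff e).IsHomogeneous ν) (e : τ →₀ ℕ) :
    ((map (algebraMap R (MvPolynomial σ R)) P * F).coeff e).IsHomogeneous ν := by
  classical
  rw [coeff_mul]
  refine IsHomogeneous.sum _ _ _ fun ab _ => ?_
  simpa [coeff_map] using (isHomogeneous_C _ (P.coeff ab.1)).mul (hF ab.2)

theorem reesBeta_map_eq_zero_of_aeval_eq_zero {R σ : Type*} [CommRing R] {n d : ℕ}
    (hd : 0 < d) {f : Fin n → MvPolynomial σ R} (hf : ∀ i, (f i).IsHomogeneous d)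
    {P : MvPolynomial (Fin n) R} (hP : aeval f P = 0) :
    reesBeta f (map (algebraMap R (MvPolynomial σ R)) P) = 0 := by
  rw [reesBeta, aeval_map_algebraMap, ← sum_homogeneousComponent P, map_sum]
  refine Finset.sum_eq_zero fun e _ => ?_
  have hPe : aeval f (homogeneousComponent e P) = 0 := by
    rw [← homogeneousComponent_mul_aeval_of_isHomogeneous hd hf, hP, map_zero]
  have hC : (fun i => LaurentPolynomial.C (f i)) = algebraMap _ (LaurentPolynomial _) ∘ f := rfl
  rw [(homogeneousComponent_isHomogeneous e P).aeval_mul_const, hC, aeval_algebraMap_apply, hPe,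
    map_zero, zero_mul]

theorem symKernel_le_ker_aeval {A : Type*} [CommRing A] {n : ℕ} (f : Fin n → A) :
    symKernel f ≤ RingHom.ker (aeval f : MvPolynomial (Fin n) A →ₐ[A] A) := by
  rw [symKernel, Ideal.span_le]
  rintro _ ⟨g, hg, rfl⟩
  have hsum := congrArg (aeval f) hg
  simp only [map_sum, map_mul, aeval_C, Algebra.algebraMap_self, RingHom.id_apply,
    map_zero] at hsum
  simpa only [SetLike.mem_coe, RingHom.mem_ker, map_sum, map_mul, aeval_X] using hsum

theorem MvPolynomial.exists_C_mul_mem_of_map_localization_eq {A σ : Type*} [CommRing A]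
    (p : Ideal A) [p.IsPrime] {K₁ K₂ : Ideal (MvPolynomial σ A)}
    (heq : K₁.map (map (algebraMap A (Localization.AtPrime p)))
      = K₂.map (map (algebraMap A (Localization.AtPrime p))))
    {x : MvPolynomial σ A} (hx : x ∈ K₁) : ∃ s ∉ p, C s * x ∈ K₂ := by
  let Aₚ := Localization.AtPrime p
  let _ : Algebra (MvPolynomial σ A) (MvPolynomial σ Aₚ) := algebraMvPolynomial
  let M := p.primeCompl.map (C : A →+* MvPolynomial σ A)
  have : IsLocalization M (MvPolynomial σ Aₚ) := isLocalization p.primeCompl Aₚ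
  have hx' :
      algebraMap _ (MvPolynomial σ Aₚ) x ∈ K₂.map (algebraMap _ (MvPolynomial σ Aₚ)) := by
    rw [algebraMap_def, ← heq]
    exact Ideal.mem_map_of_mem _ hx
  obtain ⟨⟨⟨z, hz⟩, ⟨_, s, hs, rfl⟩⟩, hxz⟩ :=
    (IsLocalization.mem_map_algebraMap_iff M (MvPolynomial σ Aₚ)).mp hx'
  have hzero : algebraMap _ (MvPolynomial σ Aₚ) (x * C s - z) = 0 := by
    rw [map_sub, map_mul, hxz, sub_self]
  obtain ⟨⟨_, t, ht, rfl⟩, hxz'⟩ := (IsLocalization.map_eq_zero_iff M _ _).mp hzero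
  refine ⟨t * s, p.primeCompl.mul_mem ht hs, ?_⟩
  have hts : C (t * s) * x = C t * z := by
    rw [map_mul]
    linear_combination hxz'
  exact hts ▸ K₂.mul_mem_left _ hz

theorem exists_pow_C_mul_mem_symKernel {A : Type*} [CommRing A] {n : ℕ} (f : Fin n → A)
    {m : Ideal A} (hm : m.FG)
    (hlt : ∀ p : PrimeSpectrum A, ¬ m ≤ p.asIdeal →
      (RingHom.ker (reesBeta f)).map (map (algebraMap A (Localization.AtPrime p.asIdeal)))
        = (symKernel f).map (map (algebraMap A (Localization.AtPrime p.asIdeal))))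
    {x : MvPolynomial (Fin n) A} (hx : x ∈ RingHom.ker (reesBeta f)) :
    ∃ N : ℕ, ∀ r ∈ m ^ N, C r * x ∈ symKernel f := by
  let J : Ideal A := ((symKernel f).colon (Ideal.span {x})).comap C
  have hJ (a : A) : a ∈ J ↔ C a * x ∈ symKernel f := Ideal.mem_colon_span_singleton
  have hmJ : m ≤ J.radical := by
    rw [← PrimeSpectrum.zeroLocus_subset_zeroLocus_iff]
    intro p hJp
    by_contra hmp
    obtain ⟨s, hsp, hs⟩ :=
      exists_C_mul_mem_of_map_localization_eq p.asIdeal (hlt p (by simpa using hmp)) hx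
    exact hsp (hJp ((hJ s).mpr hs))
  obtain ⟨N, hN⟩ := Ideal.exists_pow_le_of_le_radical_of_fg hmJ hm
  exact ⟨N, fun r hr => (hJ r).mp (hN hr)⟩

theorem statement17_general {k : Type*} [Field k] (n d : ℕ) (hn : 3 ≤ n) (hd : 1 ≤ d)
    (f : Fin n → MvPolynomial (Fin (n - 1)) k)
    (hf : ∀ i, (f i).IsHomogeneous d)
    (m : Ideal (MvPolynomial (Fin (n - 1)) k))
    (hm : m = Ideal.span (Set.range MvPolynomial.X))
    (hlt : ∀ p : PrimeSpectrum (MvPolynomial (Fin (n - 1)) k), ¬ m ≤ p.asIdeal →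
      Ideal.map (MvPolynomial.map
          (algebraMap (MvPolynomial (Fin (n - 1)) k) (Localization.AtPrime p.asIdeal)))
          (RingHom.ker (reesBeta f))
        = Ideal.map (MvPolynomial.map
          (algebraMap (MvPolynomial (Fin (n - 1)) k) (Localization.AtPrime p.asIdeal)))
          (symKernel f))
    (η : ℤ)
    (hη : ∀ ν : ℕ, η ≤ (ν : ℤ) →
      ∀ F : MvPolynomial (Fin n) (MvPolynomial (Fin (n - 1)) k),
        (∀ e, (F.coeff e).IsHomogeneous ν) →
        (∃ N : ℕ, ∀ r ∈ m ^ N, MvPolynomial.C r * F ∈ symKernel f) →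
        F ∈ symKernel f) :
    ∀ ν : ℕ, η ≤ (ν : ℤ) →
      ∀ P : MvPolynomial (Fin n) k,
        ((∀ F : MvPolynomial (Fin n) (MvPolynomial (Fin (n - 1)) k),
            (∀ e, (F.coeff e).IsHomogeneous ν) →
            MvPolynomial.map
              (algebraMap k (MvPolynomial (Fin (n - 1)) k)) P * F ∈ symKernel f)
          ↔ P ∈ RingHom.ker (MvPolynomial.aeval f :
              MvPolynomial (Fin n) k →ₐ[k] MvPolynomial (Fin (n - 1)) k)) := by
  intro ν hν P
  rw [RingHom.mem_ker]
  constructor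
  · intro hPF
    let g : MvPolynomial (Fin (n - 1)) k := X ⟨0, by omega⟩ ^ ν
    have hg : ∀ e, ((C g : MvPolynomial (Fin n) _).coeff e).IsHomogeneous ν := fun e => by
      rw [coeff_C]
      split_ifs
      exacts [isHomogeneous_X_pow _ _, isHomogeneous_zero _ _ _]
    have hPg := symKernel_le_ker_aeval f (hPF (C g) hg)
    rw [RingHom.mem_ker, map_mul, aeval_map_algebraMap, aeval_C, Algebra.algebraMap_self,
      RingHom.id_apply] at hPg
    exact (mul_eq_zero.mp hPg).resolve_right (pow_ne_zero _ (X_ne_zero _))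
  · intro hP F hF
    refine hη ν hν _ (isHomogeneous_coeff_map_mul P hF) ?_
    refine exists_pow_C_mul_mem_symKernel f (hm ▸ Submodule.fg_span (Set.finite_range _)) hlt ?_
    rw [RingHom.mem_ker, map_mul, reesBeta_map_eq_zero_of_aeval_eq_zero hd hf hP, zero_mul]

/-- let `k` be a field, `n ≥ 3`, `A = k[X₁,…,X_{n-1}]`,
`m = (X₁,…,X_{n-1})`, `f₁,…,fₙ ∈ A` homogeneous of degree `d ≥ 1`, `I = (f₁,…,fₙ)`,
`h : k[T₁,…,Tₙ] → A`, `Tᵢ ↦ fᵢ`, and grade `Sym_A(I) = A[T]/ker α` by the grading of `A`.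
Assume `I` is of linear type outside `V(m)` and `η` is an integer with
`H⁰_m(Sym_A(I))_ν = 0` for all `ν ≥ η`.  Then for all `ν ≥ η` the annihilator of the
`k[T₁,…,Tₙ]`-module `Sym_A(I)_ν` is `ker h`:  a polynomial `P ∈ k[T₁,…,Tₙ]` kills every
`F ∈ A[T]` all of whose coefficients are homogeneous of degree `ν` (modulo `ker α`) iff
`P(f₁,…,fₙ) = 0`. -/
theorem statement17 {k : Type*} [Field k] (n d : ℕ) (hn : 3 ≤ n) (hd : 1 ≤ d)
    (f : Fin n → MvPolynomial (Fin (n - 1)) k)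
    (hf : ∀ i, (f i).IsHomogeneous d)
    (m : Ideal (MvPolynomial (Fin (n - 1)) k))
    (hm : m = Ideal.span (Set.range MvPolynomial.X))
    (I : Ideal (MvPolynomial (Fin (n - 1)) k)) (hI : I = Ideal.span (Set.range f))
    (hlt : ∀ p : PrimeSpectrum (MvPolynomial (Fin (n - 1)) k), ¬ m ≤ p.asIdeal →
      Ideal.map (MvPolynomial.map
          (algebraMap (MvPolynomial (Fin (n - 1)) k) (Localization.AtPrime p.asIdeal)))
          (RingHom.ker (reesBeta f))
        = Ideal.map (MvPolynomial.map
          (algebraMap (MvPolynomial (Fin (n - 1)) k) (Localization.AtPrime p.asIdeal)))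
          (symKernel f))
    (η : ℤ)
    (hη : ∀ ν : ℕ, η ≤ (ν : ℤ) →
      ∀ F : MvPolynomial (Fin n) (MvPolynomial (Fin (n - 1)) k),
        (∀ e, (F.coeff e).IsHomogeneous ν) →
        (∃ N : ℕ, ∀ r ∈ m ^ N, MvPolynomial.C r * F ∈ symKernel f) →
        F ∈ symKernel f) :
    ∀ ν : ℕ, η ≤ (ν : ℤ) →
      ∀ P : MvPolynomial (Fin n) k,
        ((∀ F : MvPolynomial (Fin n) (MvPolynomial (Fin (n - 1)) k),
            (∀ e, (F.coeff e).IsHomogeneous ν) →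
            MvPolynomial.map
              (algebraMap k (MvPolynomial (Fin (n - 1)) k)) P * F ∈ symKernel f)
          ↔ P ∈ RingHom.ker (MvPolynomial.aeval f :
              MvPolynomial (Fin n) k →ₐ[k] MvPolynomial (Fin (n - 1)) k)) :=
  statement17_general n d hn hd f hf m hm hlt η hη
end
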